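/- arXiv:1810.08244 — 2 statements merged into one kernel-verified Lean document; each statement's English description precedes it below -/
import Mathlib

section
/- Let s(x) = c · x₁^{p₁} ⋯ x_N^{p_N} on the positive orthant with c > 0. If all exponents p_i are negative, then s is convex. -/
open Real Set

private lemma convexOn_finset_sum {ι E : Type*} [AddCommGroup E] [Module ℝ E]
    {s : Set E} (hs : Convex ℝ s) (t : Finset ι) (f : ι → E → ℝ)
    (h : ∀ i ∈ t, ConvexOn ℝ s (f i)) :
    ConvexOn ℝ s (fun x => ∑ i ∈ t, f i x) := by
  classical
  induction t using Finset.induction_on with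
  | empty => simpa using convexOn_const 0 hs
  | @insert a t hx ih =>
    simp only [Finset.sum_insert hx]
    exact (h a (Finset.mem_insert_self a t)).add
      (ih fun i hi => h i (Finset.mem_insert_of_mem hi))

private lemma exp_comp_convexOn {E : Type*} [AddCommGroup E] [Module ℝ E]
    {s : Set E} {g : E → ℝ} (hg : ConvexOn ℝ s g) :
    ConvexOn ℝ s (fun x => Real.exp (g x)) := by
  refine ⟨hg.1, fun x hx y hy a b ha hb hab => ?_⟩
  calc Real.exp (g (a • x + b • y)) ≤ Real.exp (a * g x + b * g y) :=
        Real.exp_le_exp.2 (hg.2 hx hy ha hb hab)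
    _ ≤ a * Real.exp (g x) + b * Real.exp (g y) := by
        simpa using convexOn_exp.2 (mem_univ (g x)) (mem_univ (g y)) ha hb hab

theorem positive_signomial_term_convex_neg_exponents {N : ℕ} (c : ℝ) (p : Fin N → ℝ)
    (hc : 0 < c) (hp : ∀ i, p i < 0) :
    ConvexOn ℝ {x : Fin N → ℝ | ∀ i, 0 < x i}
      (fun x => c * ∏ i, x i ^ p i) := by
  set S : Set (Fin N → ℝ) := {x : Fin N → ℝ | ∀ i, 0 < x i} with hS
  have hSpi : S = Set.pi Set.univ (fun _ : Fin N => Ioi (0:ℝ)) := by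
    ext x; simp [hS, Set.mem_pi]
  have hSconv : Convex ℝ S := by
    rw [hSpi]; exact convex_pi fun i _ => convex_Ioi 0
  -- each term x ↦ p i * log (x i) is convex on S
  have hterm : ∀ i : Fin N, ConvexOn ℝ S (fun x : Fin N → ℝ => p i * Real.log (x i)) := by
    intro i
    have hlog : ConvexOn ℝ (Ioi (0:ℝ)) (fun y => p i * Real.log y) := by
      have h1 : ConcaveOn ℝ (Ioi (0:ℝ)) (fun y => (-p i) * Real.log y) := by
        simpa [smul_eq_mul] using
          (strictConcaveOn_log_Ioi.concaveOn).smul (le_of_lt (neg_pos.2 (hp i)))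
      have h2 := h1.neg
      refine h2.congr fun y _ => ?_
      simp [neg_mul]
    have := hlog.comp_affineMap
      ((LinearMap.proj i : (Fin N → ℝ) →ₗ[ℝ] ℝ).toAffineMap)
    refine (this.subset ?_ hSconv)
    intro x hx
    exact hx i
  have hg : ConvexOn ℝ S (fun x : Fin N → ℝ =>
      Real.log c + ∑ i, p i * Real.log (x i)) :=
    (convexOn_const (Real.log c) hSconv).add
      (convexOn_finset_sum hSconv Finset.univ _ fun i _ => hterm i)
  have hexp := exp_comp_convexOn hg
  refine hexp.congr fun x hx => ?_
  have hx' : ∀ i, 0 < x i := hx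
  show Real.exp _ = _
  rw [Real.exp_add, Real.exp_log hc, Real.exp_sum]
  congr 1
  exact Finset.prod_congr rfl fun i _ => by
    rw [mul_comm, Real.exp_mul, Real.exp_log (hx' i)]
end

section
/- Let s(x) = c · x₁^{p₁} ⋯ x_N^{p_N} on the positive orthant with c > 0. If one exponent p_k is positive, all other exponents p_i (i ≠ k) are negative, and ∑_{i=1}^N p_i ≥ 1, then s is convex. -/
/-!
Put `Q = 1 - ∑_{i ≠ k} p i` and let `G` be the weighted geometric mean with weight `1 / Q` on
slot `k` and `-p i / Q` on the other slots. For `s₀ x = ∏ x i ^ p i`, replacing `x k` by `s₀ x`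
gives `G = x k ^ m` with `m = p k / Q`, and `m ≥ 1` is exactly `∑ p i ≥ 1`. By Mahler's inequality
`G` is superadditive and it is `1`-homogeneous, so for `z = a x + b y`
`G(s₀ z, z) = z k ^ m ≤ a x k ^ m + b y k ^ m ≤ G(a s₀ x + b s₀ y, z)`;
since `G` is increasing in slot `k`, `s₀ z ≤ a s₀ x + b s₀ y`.
-/

open Finset Real Function

variable {ι : Type*}

theorem convex_setOf_forall_pos : Convex ℝ {x : ι → ℝ | ∀ i, 0 < x i} := by
  simpa [Set.pi] using convex_pi (s := Set.univ) fun (_ : ι) _ => convex_Ioi (0 : ℝ)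

namespace Real

theorem prod_rpow_add_prod_rpow_le (s : Finset ι) {w A B : ι → ℝ} (hw : ∀ i ∈ s, 0 ≤ w i)
    (hw1 : ∑ i ∈ s, w i = 1) (hA : ∀ i ∈ s, 0 < A i) (hB : ∀ i ∈ s, 0 < B i) :
    ∏ i ∈ s, A i ^ w i + ∏ i ∈ s, B i ^ w i ≤ ∏ i ∈ s, (A i + B i) ^ w i := by
  have hAB : ∀ i ∈ s, 0 < A i + B i := fun i hi => add_pos (hA i hi) (hB i hi)
  have ratio_le (C : ι → ℝ) (hC : ∀ i ∈ s, 0 < C i) :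
      (∏ i ∈ s, C i ^ w i) / ∏ i ∈ s, (A i + B i) ^ w i
        ≤ ∑ i ∈ s, w i * (C i / (A i + B i)) := by
    rw [← prod_div_distrib]
    calc _ = ∏ i ∈ s, (C i / (A i + B i)) ^ w i :=
          prod_congr rfl fun i hi => (div_rpow (hC i hi).le (hAB i hi).le _).symm
      _ ≤ _ := geom_mean_le_arith_mean_weighted s w _ hw hw1
          fun i hi => div_nonneg (hC i hi).le (hAB i hi).le
  have sum_ratios :
      ∑ i ∈ s, w i * (A i / (A i + B i)) + ∑ i ∈ s, w i * (B i / (A i + B i)) = 1 := by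
    rw [← sum_add_distrib, ← hw1]
    refine sum_congr rfl fun i hi => ?_
    field_simp [(hAB i hi).ne']
  rw [← div_le_one (prod_pos fun i hi => rpow_pos_of_pos (hAB i hi) _), add_div]
  linarith [ratio_le A hA, ratio_le B hB]

theorem prod_mul_rpow_of_sum_eq_one (s : Finset ι) {w u : ι → ℝ} {c : ℝ} (hc : 0 < c)
    (hu : ∀ i ∈ s, 0 ≤ u i) (hw1 : ∑ i ∈ s, w i = 1) :
    ∏ i ∈ s, (c * u i) ^ w i = c * ∏ i ∈ s, u i ^ w i := by
  rw [prod_congr rfl fun i hi => mul_rpow hc.le (hu i hi), prod_mul_distrib,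
    ← rpow_sum_of_pos hc, hw1, rpow_one]

theorem prod_rpow_div_eq_prod_rpow_rpow_inv (s : Finset ι) {u e : ι → ℝ} (Q : ℝ)
    (hu : ∀ i ∈ s, 0 ≤ u i) : ∏ i ∈ s, u i ^ (e i / Q) = (∏ i ∈ s, u i ^ e i) ^ Q⁻¹ := by
  rw [← finsetProd_rpow _ _ fun i hi => rpow_nonneg (hu i hi) _]
  exact prod_congr rfl fun i hi => by rw [div_eq_mul_inv, rpow_mul (hu i hi)]

variable [Fintype ι] [DecidableEq ι]

theorem prod_update_rpow_le_iff {w u : ι → ℝ} {k : ι} {s t : ℝ} (hu : ∀ i, i ≠ k → 0 < u i)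
    (hwk : 0 < w k) (hs : 0 ≤ s) (ht : 0 ≤ t) :
    ∏ i, update u k s i ^ w i ≤ ∏ i, update u k t i ^ w i ↔ s ≤ t := by
  have hrest (r : ℝ) :
      ∏ i ∈ univ.erase k, update u k r i ^ w i = ∏ i ∈ univ.erase k, u i ^ w i :=
    prod_congr rfl fun i hi => by rw [update_of_ne (ne_of_mem_erase hi)]
  rw [← mul_prod_erase univ _ (mem_univ k), ← mul_prod_erase univ _ (mem_univ k), hrest, hrest,
    update_self, update_self, mul_le_mul_iff_left₀ (prod_pos fun i hi =>
      rpow_pos_of_pos (hu i (ne_of_mem_erase hi)) _), rpow_le_rpow_iff hs ht hwk]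

theorem prod_update_prod_rpow_rpow_update_neg {p x : ι → ℝ} (k : ι)
    (hx : ∀ i, i ≠ k → 0 < x i) :
    ∏ i, update x k (∏ j, x j ^ p j) i ^ update (-p) k 1 i = x k ^ p k := by
  have hrest : ∏ i ∈ univ.erase k, update x k (∏ j, x j ^ p j) i ^ update (-p) k 1 i
      = ∏ i ∈ univ.erase k, (x i ^ p i)⁻¹ :=
    prod_congr rfl fun i hi => by
      have hik := ne_of_mem_erase hi
      rw [update_of_ne hik, update_of_ne hik, Pi.neg_apply, rpow_neg (hx i hik).le]
  rw [← mul_prod_erase univ _ (mem_univ k), hrest, update_self, update_self, rpow_one,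
    ← mul_prod_erase univ _ (mem_univ k), prod_inv_distrib, mul_assoc,
    mul_inv_cancel₀ (prod_pos fun i hi => rpow_pos_of_pos (hx i (ne_of_mem_erase hi)) _).ne',
    mul_one]

end Real

theorem convexOn_of_prod_update_rpow_eq [Fintype ι] [DecidableEq ι] {w : ι → ℝ} {k : ι} {m : ℝ}
    {f : (ι → ℝ) → ℝ} (hw : ∀ i, 0 ≤ w i) (hwk : 0 < w k) (hw1 : ∑ i, w i = 1) (hm : 1 ≤ m)
    (hf : ∀ x, (∀ i, 0 < x i) → 0 < f x)
    (hfw : ∀ x, (∀ i, 0 < x i) → ∏ i, update x k (f x) i ^ w i = x k ^ m) :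
    ConvexOn ℝ {x | ∀ i, 0 < x i} f := by
  refine convexOn_iff_forall_pos.2 ⟨convex_setOf_forall_pos, fun x hx y hy a b ha hb hab => ?_⟩
  set z := a • x + b • y
  have hz (i : ι) : 0 < z i := by
    simp only [z, Pi.add_apply, Pi.smul_apply, smul_eq_mul]
    have := hx i; have := hy i; positivity
  have hlift_pos (u : ι → ℝ) (hu : ∀ i, 0 < u i) : ∀ i ∈ univ, 0 < update u k (f u) i :=
    fun i _ => (forall_update_iff u fun _ v => 0 < v).2 ⟨hf u hu, fun j _ => hu j⟩ i
  have hlift_mul (c : ℝ) (hc : 0 < c) (u : ι → ℝ) (hu : ∀ i, 0 < u i) :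
      ∏ i, (c * update u k (f u) i) ^ w i = c * u k ^ m := by
    rw [prod_mul_rpow_of_sum_eq_one _ hc (fun i hi => (hlift_pos u hu i hi).le) hw1, hfw u hu]
  have hlift_add (i : ι) : a * update x k (f x) i + b * update y k (f y) i
      = update z k (a * f x + b * f y) i := by
    rcases eq_or_ne i k with rfl | hi
    · simp
    · simp [hi, z]
  have key : ∏ i, update z k (f z) i ^ w i ≤ ∏ i, update z k (a * f x + b * f y) i ^ w i :=
    calc ∏ i, update z k (f z) i ^ w i = z k ^ m := hfw z hz
      _ ≤ a * x k ^ m + b * y k ^ m := by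
        simpa [z] using (convexOn_rpow hm).2 (hx k).le (hy k).le ha.le hb.le hab
      _ = ∏ i, (a * update x k (f x) i) ^ w i + ∏ i, (b * update y k (f y) i) ^ w i := by
        rw [hlift_mul a ha x hx, hlift_mul b hb y hy]
      _ ≤ ∏ i, (a * update x k (f x) i + b * update y k (f y) i) ^ w i :=
        prod_rpow_add_prod_rpow_le _ (fun i _ => hw i) hw1
          (fun i hi => mul_pos ha (hlift_pos x hx i hi))
          (fun i hi => mul_pos hb (hlift_pos y hy i hi))
      _ = _ := by simp only [hlift_add]
  have hfxy : 0 ≤ a * f x + b * f y := by have := hf x hx; have := hf y hy; positivity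
  exact (prod_update_rpow_le_iff (fun i _ => hz i) hwk (hf z hz).le hfxy).1 key

theorem positive_signomial_term_convex_one_pos_exponent_general {N : ℕ} (c : ℝ) (p : Fin N → ℝ)
    (k : Fin N) (hc : 0 < c) (hp : ∀ i, i ≠ k → p i < 0)
    (hsum : 1 ≤ ∑ i, p i) :
    ConvexOn ℝ {x : Fin N → ℝ | ∀ i, 0 < x i}
      (fun x => c * ∏ i, x i ^ p i) := by
  set e : Fin N → ℝ := update (-p) k 1
  set Q := ∑ i, e i
  have he (i : Fin N) : 0 ≤ e i := by
    rcases eq_or_ne i k with rfl | hi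
    · simp [e]
    · simpa [e, hi] using (hp i hi).le
  have hQ : 1 ≤ Q := by simpa [e] using single_le_sum (fun i _ => he i) (mem_univ k)
  have hQp : Q + ∑ i, p i = 1 + p k := by
    simp only [Q, e, sum_update_of_mem (mem_univ k),
      sum_eq_add_sum_sdiff_singleton_of_mem (mem_univ k) p, Pi.neg_apply, sum_neg_distrib]
    ring
  have hw1 : ∑ i, e i / Q = 1 := by rw [← sum_div, div_self (by positivity)]
  have hm : 1 ≤ p k / Q := (one_le_div (by positivity)).2 (by linarith)
  have hlift (x : Fin N → ℝ) (hx : ∀ i, 0 < x i) :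
      ∏ i, update x k (∏ j, x j ^ p j) i ^ (e i / Q) = x k ^ (p k / Q) := by
    have hlift_nonneg : ∀ i ∈ univ, 0 ≤ update x k (∏ j, x j ^ p j) i := fun i _ =>
      (forall_update_iff x fun _ v => 0 ≤ v).2
        ⟨prod_nonneg fun j _ => (rpow_pos_of_pos (hx j) _).le, fun j _ => (hx j).le⟩ i
    rw [prod_rpow_div_eq_prod_rpow_rpow_inv _ _ hlift_nonneg,
      prod_update_prod_rpow_rpow_update_neg k fun i _ => hx i, ← rpow_mul (hx k).le,
      div_eq_mul_inv]
  exact ConvexOn.smul hc.le (convexOn_of_prod_update_rpow_eq (w := fun i => e i / Q)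
    (fun i => div_nonneg (he i) (by positivity)) (by simp only [e, update_self]; positivity) hw1 hm
    (fun x hx => prod_pos fun i _ => rpow_pos_of_pos (hx i) _) hlift)

theorem positive_signomial_term_convex_one_pos_exponent {N : ℕ} (c : ℝ) (p : Fin N → ℝ)
    (k : Fin N) (hc : 0 < c) (hk : 0 < p k) (hp : ∀ i, i ≠ k → p i < 0)
    (hsum : 1 ≤ ∑ i, p i) :
    ConvexOn ℝ {x : Fin N → ℝ | ∀ i, 0 < x i}
      (fun x => c * ∏ i, x i ^ p i) :=
  positive_signomial_term_convex_one_pos_exponent_general c p k hc hp hsum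
end
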